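/- arXiv:1109.3336 — 4 statements merged into one kernel-verified Lean document; each statement's English description precedes it below -/
import Mathlib

section
/- With Θ ∈ ℝ^{m×m} the matrix with entries Θ_ij = ⟨φ_i, φ_j⟩_{L²}, the defect satisfies the identity D_m(Φ) = ‖K − K^{−1/2} Θ K^{−1/2}‖₂, where ‖·‖₂ denotes the ℓ₂-operator norm of a matrix and K^{−1/2} is the inverse of the symmetric positive definite square root of K. -/
open scoped RealInnerProductSpace BigOperators
open Matrix
open scoped MatrixOrder Matrix.Norms.L2Operator

noncomputable section

/-!
Write `f = ∑ cᵢ φᵢ ∈ span φ` and `x = K^{1/2} c`. Since `K` is the Gram matrix of `φ`, one has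
`‖f‖_H² = cᵀ K c = ‖x‖²`, `Φ f = K c` and `‖f‖²_{L²} = cᵀ Θ c`, so
`‖Φ f‖² − ‖f‖²_{L²} = cᵀ (K² − Θ) c = xᵀ A x` with `A = K − K^{-1/2} Θ K^{-1/2}`.
As `c ↦ K^{1/2} c` is onto, the defect is the supremum of `|xᵀ A x|` over the Euclidean unit
ball, which for the symmetric matrix `A` is its operator norm.
-/

namespace Matrix

section Quadratic

variable {n p R : Type*} [Fintype n] [Fintype p] [CommSemiring R]

theorem mulVec_dotProduct_mulVec_self (S : Matrix n p R) (c : p → R) :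
    S *ᵥ c ⬝ᵥ S *ᵥ c = c ⬝ᵥ (Sᵀ * S) *ᵥ c := by
  rw [← mulVec_mulVec, dotProduct_mulVec c, vecMul_transpose]

theorem mulVec_dotProduct_mulVec_mulVec (S : Matrix n p R) (M : Matrix n n R) (c : p → R) :
    S *ᵥ c ⬝ᵥ M *ᵥ S *ᵥ c = c ⬝ᵥ (Sᵀ * M * S) *ᵥ c := by
  rw [← mulVec_mulVec, ← mulVec_mulVec, dotProduct_mulVec c, vecMul_transpose]

end Quadratic

section Sqrt

variable {n : Type*} [Fintype n] [DecidableEq n]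

theorem transpose_sqrt (K : Matrix n n ℝ) : (CFC.sqrt K)ᵀ = CFC.sqrt K := by
  simpa only [IsHermitian, conjTranspose_eq_transpose_of_trivial]
    using (CFC.sqrt_nonneg K).posSemidef.isHermitian

theorem PosDef.isUnit_sqrt {K : Matrix n n ℝ} (hK : K.PosDef) : IsUnit (CFC.sqrt K) :=
  CFC.isUnit_sqrt_iff_isStrictlyPositive.mpr hK.isStrictlyPositive

theorem PosDef.sqrt_mul_sub_inv_sqrt_mul_mul_inv_sqrt_mul_sqrt {K : Matrix n n ℝ}
    (hK : K.PosDef) (Θ : Matrix n n ℝ) :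
    CFC.sqrt K * (K - (CFC.sqrt K)⁻¹ * Θ * (CFC.sqrt K)⁻¹) * CFC.sqrt K = K * K - Θ := by
  have hSS : CFC.sqrt K * CFC.sqrt K = K := CFC.sqrt_mul_sqrt_self K hK.posSemidef.nonneg
  have hS := (isUnit_iff_isUnit_det _).mp hK.isUnit_sqrt
  set S := CFC.sqrt K
  calc S * (K - S⁻¹ * Θ * S⁻¹) * S = S * K * S - (S * S⁻¹) * Θ * (S⁻¹ * S) := by noncomm_ring
    _ = K * K - Θ := by
      rw [mul_nonsing_inv S hS, nonsing_inv_mul S hS, ← hSS]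
      noncomm_ring

theorem IsHermitian.sub_inv_sqrt_mul_mul_inv_sqrt {K Θ : Matrix n n ℝ} (hK : K.IsHermitian)
    (hΘ : Θ.IsHermitian) : (K - (CFC.sqrt K)⁻¹ * Θ * (CFC.sqrt K)⁻¹).IsHermitian := by
  have hS : (CFC.sqrt K)⁻¹ᴴ = (CFC.sqrt K)⁻¹ := (CFC.sqrt_nonneg K).posSemidef.isHermitian.inv
  have hSΘS := isHermitian_conjTranspose_mul_mul (CFC.sqrt K)⁻¹ hΘ
  rw [hS] at hSΘS
  exact hK.sub hSΘS

end Sqrt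

end Matrix

theorem ContinuousLinearMap.sSup_abs_inner_self_closedBall_eq_norm {E : Type*}
    [NormedAddCommGroup E] [InnerProductSpace ℝ E] (T : E →L[ℝ] E)
    (hT : (T : E →ₗ[ℝ] E).IsSymmetric) :
    sSup ((fun x ↦ |⟪x, T x⟫|) '' Metric.closedBall 0 1) = ‖T‖ := by
  have hle : ∀ x ∈ Metric.closedBall (0 : E) 1, |⟪x, T x⟫| ≤ ‖T‖ := fun x hx ↦ by
    rw [mem_closedBall_zero_iff] at hx
    calc |⟪x, T x⟫| ≤ ‖x‖ * ‖T x‖ := abs_real_inner_le_norm _ _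
      _ ≤ 1 * (‖T‖ * 1) := by gcongr; exact T.le_opNorm_of_le hx
      _ = ‖T‖ := by ring
  have h0 : (0 : E) ∈ Metric.closedBall 0 1 := Metric.mem_closedBall_self zero_le_one
  have hbdd : BddAbove ((fun x ↦ |⟪x, T x⟫|) '' Metric.closedBall 0 1) :=
    ⟨‖T‖, Set.forall_mem_image.2 hle⟩
  refine le_antisymm (csSup_le ⟨_, Set.mem_image_of_mem _ h0⟩ (Set.forall_mem_image.2 hle)) ?_
  rw [T.norm_eq_iSup_rayleighQuotient hT]
  refine ciSup_le fun x ↦ ?_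
  rcases eq_or_ne x 0 with rfl | hx
  · simpa using le_csSup hbdd (Set.mem_image_of_mem _ h0)
  -- the Rayleigh quotient is scale invariant, so it suffices to evaluate it on the unit sphere
  have hu : ‖‖x‖⁻¹ • x‖ = 1 := norm_smul_inv_norm hx
  rw [← T.rayleigh_smul x (inv_ne_zero (norm_ne_zero_iff.2 hx)), rayleighQuotient,
    reApplyInnerSelf_apply, hu]
  refine le_csSup_of_le hbdd (Set.mem_image_of_mem _ (mem_closedBall_zero_iff.2 hu.le)) ?_
  simp [real_inner_comm]

section Gram

variable {E F : Type*} [NormedAddCommGroup E] [InnerProductSpace ℝ E]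
  [NormedAddCommGroup F] [InnerProductSpace ℝ F] {n : Type*} [Fintype n]
  (v : n → E) (c : n → ℝ)

theorem inner_sum_smul_eq_gram_mulVec (j : n) : ⟪v j, ∑ i, c i • v i⟫ = (gram ℝ v *ᵥ c) j := by
  simp only [inner_sum, real_inner_smul_right, mulVec, dotProduct, gram_apply, mul_comm]

theorem norm_sum_smul_sq_eq_dotProduct_gram_mulVec :
    ‖∑ i, c i • v i‖ ^ 2 = c ⬝ᵥ gram ℝ v *ᵥ c := by
  simpa only [star_trivial, real_inner_self_eq_norm_sq]
    using (star_dotProduct_gram_mulVec v c c).symm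

theorem sum_inner_sum_smul_sq_eq_dotProduct_gram_mul_gram_mulVec :
    ∑ j, ⟪v j, ∑ i, c i • v i⟫ ^ 2 = c ⬝ᵥ (gram ℝ v * gram ℝ v) *ᵥ c := by
  have hG : (gram ℝ v)ᵀ = gram ℝ v := by
    simpa only [IsHermitian, conjTranspose_eq_transpose_of_trivial] using isHermitian_gram ℝ v
  simp only [inner_sum_smul_eq_gram_mulVec, sq]
  rw [← dotProduct, mulVec_dotProduct_mulVec_self, hG]

theorem sum_inner_sq_sub_norm_map_sq_eq {G : Type*} [FunLike G E F] [LinearMapClass G ℝ E F]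
    (ι : G) :
    ∑ j, ⟪v j, ∑ i, c i • v i⟫ ^ 2 - ‖ι (∑ i, c i • v i)‖ ^ 2 =
      c ⬝ᵥ (gram ℝ v * gram ℝ v - gram ℝ (ι ∘ v)) *ᵥ c := by
  have hι := norm_sum_smul_sq_eq_dotProduct_gram_mulVec (ι ∘ v) c
  simp only [Function.comp_apply] at hι
  rw [map_sum, Finset.sum_congr rfl fun i _ ↦ map_smul ι (c i) (v i), hι,
    sum_inner_sum_smul_sq_eq_dotProduct_gram_mul_gram_mulVec, sub_mulVec, dotProduct_sub]

end Gram

section Sampling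

variable {E F : Type*} [NormedAddCommGroup E] [InnerProductSpace ℝ E]
  [NormedAddCommGroup F] [InnerProductSpace ℝ F] {n : Type*} [Fintype n] [DecidableEq n]
  {G : Type*} [FunLike G E F] [LinearMapClass G ℝ E F] (v : n → E)

theorem norm_sum_smul_eq_norm_sqrt_gram_mulVec (c : n → ℝ) :
    ‖∑ i, c i • v i‖ = ‖(WithLp.toLp 2 (CFC.sqrt (gram ℝ v) *ᵥ c) : EuclideanSpace ℝ n)‖ := by
  rw [← sq_eq_sq₀ (norm_nonneg _) (norm_nonneg _), norm_sum_smul_sq_eq_dotProduct_gram_mulVec,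
    ← real_inner_self_eq_norm_sq, EuclideanSpace.inner_toLp_toLp, star_trivial,
    mulVec_dotProduct_mulVec_self, transpose_sqrt,
    CFC.sqrt_mul_sqrt_self _ (posSemidef_gram ℝ v).nonneg]

theorem sum_inner_sq_sub_norm_map_sq_eq_inner_toEuclideanCLM (hv : (gram ℝ v).PosDef)
    (ι : G) (c : n → ℝ) :
    let S := CFC.sqrt (gram ℝ v)
    let x : EuclideanSpace ℝ n := WithLp.toLp 2 (S *ᵥ c)
    ∑ j, ⟪v j, ∑ i, c i • v i⟫ ^ 2 - ‖ι (∑ i, c i • v i)‖ ^ 2 =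
      ⟪x, toEuclideanCLM (𝕜 := ℝ) (gram ℝ v - S⁻¹ * gram ℝ (ι ∘ v) * S⁻¹) x⟫ := by
  intro S x
  rw [sum_inner_sq_sub_norm_map_sq_eq, inner_toEuclideanCLM, WithLp.ofLp_toLp,
    mulVec_dotProduct_mulVec_mulVec, transpose_sqrt,
    hv.sqrt_mul_sub_inv_sqrt_mul_mul_inv_sqrt_mul_sqrt]

/-- The defect `D(Φ)` of the sampling operator `Φ f = (⟪v j, f⟫)ⱼ`, measured against the norm
`f ↦ ‖ι f‖` of a second inner product space. -/
def samplingDefect (ι : G) : ℝ :=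
  sSup {d : ℝ | ∃ f ∈ Submodule.span ℝ (Set.range v), ‖f‖ ≤ 1 ∧
    d = |∑ j, ⟪v j, f⟫ ^ 2 - ‖ι f‖ ^ 2|}

theorem samplingDefect_eq_norm_toEuclideanCLM (hv : (gram ℝ v).PosDef) (ι : G) :
    samplingDefect v ι = ‖toEuclideanCLM (𝕜 := ℝ)
      (gram ℝ v - (CFC.sqrt (gram ℝ v))⁻¹ * gram ℝ (ι ∘ v) * (CFC.sqrt (gram ℝ v))⁻¹)‖ := by
  set S := CFC.sqrt (gram ℝ v)
  set T := toEuclideanCLM (𝕜 := ℝ) (gram ℝ v - S⁻¹ * gram ℝ (ι ∘ v) * S⁻¹)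
  have hT : (T : EuclideanSpace ℝ n →ₗ[ℝ] _).IsSymmetric := by
    rw [coe_toEuclideanCLM_eq_toEuclideanLin, isSymmetric_toEuclideanLin_iff]
    exact hv.isHermitian.sub_inv_sqrt_mul_mul_inv_sqrt (isHermitian_gram ℝ _)
  have hS : IsUnit S.det := (isUnit_iff_isUnit_det _).mp hv.isUnit_sqrt
  rw [← T.sSup_abs_inner_self_closedBall_eq_norm hT, samplingDefect]
  congr 1
  ext d
  simp only [Set.mem_image, mem_closedBall_zero_iff, Submodule.mem_span_range_iff_exists_fun,
    exists_exists_eq_and]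
  constructor
  · rintro ⟨c, hc, rfl⟩
    refine ⟨WithLp.toLp 2 (S *ᵥ c), ?_, ?_⟩
    · rwa [← norm_sum_smul_eq_norm_sqrt_gram_mulVec]
    · rw [sum_inner_sq_sub_norm_map_sq_eq_inner_toEuclideanCLM v hv ι c]
  · rintro ⟨x, hx, rfl⟩
    obtain ⟨c, rfl⟩ : ∃ c, WithLp.toLp 2 (S *ᵥ c) = x :=
      ⟨S⁻¹ *ᵥ x.ofLp, by simp [mulVec_mulVec, mul_nonsing_inv _ hS]⟩
    refine ⟨c, by rwa [norm_sum_smul_eq_norm_sqrt_gram_mulVec], ?_⟩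
    rw [sum_inner_sq_sub_norm_map_sq_eq_inner_toEuclideanCLM v hv ι c]

end Sampling

theorem sampled_fpca_defect_identity_general
    {H : Type*} [NormedAddCommGroup H] [InnerProductSpace ℝ H]
    {L : Type*} [NormedAddCommGroup L] [InnerProductSpace ℝ L]
    (ι : H →L[ℝ] L)
    {m : ℕ} (φ : Fin m → H)
    (K Θ : Matrix (Fin m) (Fin m) ℝ)
    (hK : ∀ i j, K i j = ⟪φ i, φ j⟫)
    (hΘ : ∀ i j, Θ i j = ⟪ι (φ i), ι (φ j)⟫)
    (hKpd : K.PosDef) :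
    sSup { d : ℝ | ∃ f ∈ Submodule.span ℝ (Set.range φ), ‖f‖ ≤ 1 ∧
        d = |(∑ j, (⟪φ j, f⟫ : ℝ)^2) - ‖ι f‖^2| } =
      ‖Matrix.toEuclideanCLM (𝕜 := ℝ)
        (K - (CFC.sqrt K)⁻¹ * Θ * (CFC.sqrt K)⁻¹)‖ := by
  obtain rfl : K = gram ℝ φ := Matrix.ext hK
  obtain rfl : Θ = gram ℝ (ι ∘ φ) := Matrix.ext hΘ
  exact samplingDefect_eq_norm_toEuclideanCLM φ hKpd ι

/-- Lemma 2 of the paper: computing the defect `D_m(Φ)`.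
`H` is a Hilbert space of functions continuously embedded (via `ι`) in `L²` (modelled by a
Hilbert space `L`); `Φ f = (⟪φ₁,f⟫_H, …, ⟪φ_m,f⟫_H)` for linearly independent `φⱼ ∈ H`,
`K i j = ⟪φᵢ,φⱼ⟫_H` is positive definite, `Θ i j = ⟪φᵢ,φⱼ⟫_{L²}`, and
`D_m(Φ) = sup{ |‖Φ f‖₂² − ‖f‖²_{L²}| : f ∈ Range Φ* = span φ, ‖f‖_H ≤ 1 }`.
Then `D_m(Φ) = ‖K − K^{-1/2} Θ K^{-1/2}‖₂` (ℓ₂-operator norm), with `K^{-1/2}` the inverse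
of the symmetric positive definite square root of `K`. -/
theorem sampled_fpca_defect_identity
    {H : Type*} [NormedAddCommGroup H] [InnerProductSpace ℝ H]
    {L : Type*} [NormedAddCommGroup L] [InnerProductSpace ℝ L]
    (ι : H →L[ℝ] L) (hι : Function.Injective ι)
    {m : ℕ} (φ : Fin m → H) (hφ : LinearIndependent ℝ φ)
    (K Θ : Matrix (Fin m) (Fin m) ℝ)
    (hK : ∀ i j, K i j = ⟪φ i, φ j⟫)
    (hΘ : ∀ i j, Θ i j = ⟪ι (φ i), ι (φ j)⟫)
    (hKpd : K.PosDef) :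
    sSup { d : ℝ | ∃ f ∈ Submodule.span ℝ (Set.range φ), ‖f‖ ≤ 1 ∧
        d = |(∑ j, (⟪φ j, f⟫ : ℝ)^2) - ‖ι f‖^2| } =
      ‖Matrix.toEuclideanCLM (𝕜 := ℝ)
        (K - (CFC.sqrt K)⁻¹ * Θ * (CFC.sqrt K)⁻¹)‖ :=
  sampled_fpca_defect_identity_general ι φ K Θ hK hΘ hKpd
end
end

section
/- Suppose f*₁,…,f*_r ∈ H satisfy ‖f*_j‖_H ≤ ρ for each j, and the vectors z*_j := Φf*_j satisfy C_m(f*) := max_{1≤i,j≤r} |⟨z*_i, z*_j⟩_{ℝ^m} − δ_ij| ≤ 1/(2r). Then there exists a matrix Z̃* ∈ ℝ^{m×r} with orthonormal columns ((Z̃*)ᵀZ̃* = I_r) such that Range(Z̃*) = Range(Z*) and tr(K⁻¹ Z̃*(Z̃*)ᵀ) ≤ 2rρ², where Z* := (z*₁, …, z*_r) ∈ ℝ^{m×r}. -/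
/-!
Let `Z = (z*₁ … z*_r)` and `G = ZᵀZ`. The entrywise bound on `G - 1` gives `G ≥ ½`, so
`Z̃ = Z G^(-1/2)` has orthonormal columns and the range of `Z`, and
`tr(K⁻¹ Z̃ Z̃ᵀ) = tr(G⁻¹ M)` with `M = Zᵀ K⁻¹ Z ≥ 0`. As `G⁻¹ ≤ 2`, this is at most `2 tr M`,
and each diagonal entry `z*ⱼᵀ K⁻¹ z*ⱼ` of `M` is at most `‖f*ⱼ‖² ≤ ρ²`.
-/

open scoped RealInnerProductSpace
open Matrix

namespace Matrix

variable {n : Type*} [Fintype n]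

theorem abs_dotProduct_mulVec_le {A : Matrix n n ℝ} {ε : ℝ} (hA : ∀ i j, |A i j| ≤ ε)
    (x : n → ℝ) : |x ⬝ᵥ (A *ᵥ x)| ≤ ε * (∑ i, |x i|) ^ 2 := by
  calc |x ⬝ᵥ (A *ᵥ x)| = |∑ i, ∑ j, x i * A i j * x j| := by
        simp only [dotProduct, mulVec, Finset.mul_sum, mul_assoc]
    _ ≤ ∑ i, ∑ j, |x i| * ε * |x j| := by
        refine (Finset.abs_sum_le_sum_abs _ _).trans (Finset.sum_le_sum fun i _ => ?_)
        refine (Finset.abs_sum_le_sum_abs _ _).trans (Finset.sum_le_sum fun j _ => ?_)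
        rw [abs_mul, abs_mul]
        gcongr
        exact hA i j
    _ = ε * (∑ i, |x i|) ^ 2 := by
        rw [sq, Finset.sum_mul_sum, Finset.mul_sum]
        simp only [Finset.mul_sum]
        exact Finset.sum_congr rfl fun i _ => Finset.sum_congr rfl fun j _ => by ring

variable [DecidableEq n]

/-- Entrywise closeness to the identity bounds the quadratic form from below, since
`(∑ |xᵢ|)² ≤ card n * ∑ xᵢ²`. -/
theorem posSemidef_sub_smul_one_of_abs_sub_one_le {A : Matrix n n ℝ} {ε c : ℝ}
    (hA : A.IsHermitian) (hε : ∀ i j, |A i j - (1 : Matrix n n ℝ) i j| ≤ ε)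
    (hεc : Fintype.card n * ε ≤ 1 - c) : (A - c • 1).PosSemidef := by
  refine .of_dotProduct_mulVec_nonneg (by simpa [IsHermitian] using hA.eq) fun x => ?_
  rw [star_trivial]
  rcases isEmpty_or_nonempty n with _ | ⟨⟨i⟩⟩
  · simp [dotProduct]
  have hε0 : 0 ≤ ε := (abs_nonneg _).trans (hε i i)
  have hdev := abs_dotProduct_mulVec_le (A := A - 1) (fun i j => hε i j) x
  have hcs : (∑ i, |x i|) ^ 2 ≤ Fintype.card n * (x ⬝ᵥ x) := by
    simpa [sq_abs, dotProduct, sq] using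
      sq_sum_le_card_mul_sum_sq (s := Finset.univ) (f := fun i => |x i|)
  have hsplit : x ⬝ᵥ ((A - c • 1) *ᵥ x) = x ⬝ᵥ ((A - 1) *ᵥ x) + (1 - c) * (x ⬝ᵥ x) := by
    simp only [sub_mulVec, smul_mulVec, one_mulVec, dotProduct_sub, dotProduct_smul, smul_eq_mul]
    ring
  have hxx : 0 ≤ x ⬝ᵥ x := by simpa using dotProduct_star_self_nonneg x
  rw [hsplit]
  linarith [abs_le.mp hdev, mul_le_mul_of_nonneg_left hcs hε0,
    mul_le_mul_of_nonneg_right hεc hxx]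

section RCLike

variable {𝕜 : Type*} [RCLike 𝕜]

open scoped ComplexOrder MatrixOrder

theorem PosSemidef.trace_mul_nonneg {A B : Matrix n n 𝕜} (hA : A.PosSemidef)
    (hB : B.PosSemidef) : 0 ≤ (A * B).trace := by
  set S := CFC.sqrt A
  have hS : Sᴴ = S := (CFC.sqrt_nonneg A).posSemidef.isHermitian.eq
  rw [← CFC.sqrt_mul_sqrt_self A hA.nonneg, ← trace_mul_cycle]
  simpa only [hS] using (hB.mul_mul_conjTranspose_same S).trace_nonneg

theorem PosDef.exists_inv_sqrt {A : Matrix n n 𝕜} (hA : A.PosDef) :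
    ∃ R : Matrix n n 𝕜, R.IsHermitian ∧ R * A * R = 1 ∧ R * R = A⁻¹ := by
  set S := CFC.sqrt A
  have hSS : S * S = A := CFC.sqrt_mul_sqrt_self A hA.posSemidef.nonneg
  have hS : S.IsHermitian := (CFC.sqrt_nonneg A).posSemidef.isHermitian
  have hSdet : IsUnit S.det :=
    isUnit_of_mul_isUnit_left (by rw [← det_mul, hSS]; exact hA.isUnit.map detMonoidHom)
  refine ⟨S⁻¹, hS.inv, ?_, by rw [← hSS, mul_inv_rev]⟩
  rw [← hSS, mul_assoc, mul_assoc, mul_nonsing_inv _ hSdet, mul_one, nonsing_inv_mul _ hSdet]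

end RCLike

/-- Conjugating `A - c • 1 ≥ 0` by `A^(-1/2)` gives `1 - c • A⁻¹ ≥ 0`. -/
theorem PosDef.mul_trace_inv_mul_le {A B : Matrix n n ℝ} {c : ℝ} (hA : A.PosDef)
    (hAc : (A - c • 1).PosSemidef) (hB : B.PosSemidef) : c * (A⁻¹ * B).trace ≤ B.trace := by
  obtain ⟨R, hR, hRAR, hRR⟩ := hA.exists_inv_sqrt
  have hcong : (1 - c • A⁻¹).PosSemidef := by
    have h := hAc.mul_mul_conjTranspose_same R
    rwa [hR.eq, mul_sub, sub_mul, hRAR, Matrix.mul_smul, Matrix.smul_mul, mul_one, hRR] at h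
  have h := hcong.trace_mul_nonneg hB
  rw [sub_mul, smul_mul, one_mul, trace_sub, trace_smul, smul_eq_mul] at h
  linarith

theorem exists_orthonormal_columns {m : Type*} [Fintype m] {Z : Matrix m n ℝ}
    (hZ : (Zᵀ * Z).PosDef) :
    ∃ Q : Matrix m n ℝ, Qᵀ * Q = 1 ∧
      LinearMap.range Q.mulVecLin = LinearMap.range Z.mulVecLin ∧
      Q * Qᵀ = Z * (Zᵀ * Z)⁻¹ * Zᵀ := by
  obtain ⟨R, hR, hRGR, hRR⟩ := hZ.exists_inv_sqrt
  have hRt : Rᵀ = R := hR.eq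
  refine ⟨Z * R, ?_, ?_, ?_⟩
  · rw [transpose_mul, hRt, ← hRGR]
    simp only [Matrix.mul_assoc]
  · rw [mulVecLin_mul]
    refine LinearMap.range_comp_of_range_eq_top _ (LinearMap.range_eq_top.mpr fun y => ?_)
    refine ⟨(Zᵀ * Z * R) *ᵥ y, ?_⟩
    rw [mulVecLin_apply, mulVec_mulVec, ← Matrix.mul_assoc, hRGR, one_mulVec]
  · rw [transpose_mul, hRt, ← hRR]
    simp only [Matrix.mul_assoc]

section Gram

variable {ι H : Type*} [Fintype ι] [DecidableEq ι] [NormedAddCommGroup H] [InnerProductSpace ℝ H]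

/-- `zᵀ K⁻¹ z` is the squared norm of the projection of `f` onto `span φ`, the vector
`g = ∑ₖ (K⁻¹ z)ₖ • φₖ` with `‖g‖² = ⟪g, f⟫`. -/
theorem dotProduct_inv_gram_mulVec_le {φ : ι → H} (hφ : IsUnit (gram ℝ φ).det) (f : H) :
    (fun k => ⟪φ k, f⟫) ⬝ᵥ ((gram ℝ φ)⁻¹ *ᵥ fun k => ⟪φ k, f⟫) ≤ ‖f‖ ^ 2 := by
  set z : ι → ℝ := fun k => ⟪φ k, f⟫
  set v := (gram ℝ φ)⁻¹ *ᵥ z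
  set g := ∑ k, v k • φ k
  have hgf : ⟪g, f⟫ = v ⬝ᵥ z := by
    simp only [g, sum_inner, real_inner_smul_left, dotProduct, z]
  have hgg : ‖g‖ ^ 2 = v ⬝ᵥ z := by
    rw [← real_inner_self_eq_norm_sq, ← star_dotProduct_gram_mulVec, star_trivial, mulVec_mulVec,
      mul_nonsing_inv _ hφ, one_mulVec]
  have hgnorm : ‖g‖ ≤ ‖f‖ := by
    rcases (norm_nonneg g).eq_or_lt with hg | hg
    · rw [← hg]; exact norm_nonneg f
    · refine le_of_mul_le_mul_left ?_ hg
      rw [← sq, hgg, ← hgf]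
      exact real_inner_le_norm g f
  rw [dotProduct_comm, ← hgg]
  gcongr

theorem trace_transpose_mul_inv_gram_mul_le {r : Type*} [Fintype r] {φ : ι → H}
    (hφ : IsUnit (gram ℝ φ).det) {f : r → H} {Z : Matrix ι r ℝ}
    (hZ : ∀ k j, Z k j = ⟪φ k, f j⟫) :
    (Zᵀ * (gram ℝ φ)⁻¹ * Z).trace ≤ ∑ j, ‖f j‖ ^ 2 := by
  refine Finset.sum_le_sum fun j _ => le_of_eq_of_le ?_ (dotProduct_inv_gram_mulVec_le hφ (f j))
  rw [diag_apply, Matrix.mul_assoc]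
  simp only [mul_apply, transpose_apply, dotProduct, mulVec, hZ]

end Gram

end Matrix

theorem sampled_fpca_feasible_orthonormal_version_general
    {H : Type*} [NormedAddCommGroup H] [InnerProductSpace ℝ H]
    {m r : ℕ}
    (φ : Fin m → H)
    (K : Matrix (Fin m) (Fin m) ℝ) (hK : ∀ i j, K i j = ⟪φ i, φ j⟫) (hKpd : K.PosDef)
    (ρ : ℝ)
    (fstar : Fin r → H) (hfnorm : ∀ j, ‖fstar j‖ ≤ ρ)
    (zstar : Fin r → Fin m → ℝ) (hz : ∀ j k, zstar j k = ⟪φ k, fstar j⟫)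
    (hCm : ∀ i j, |zstar i ⬝ᵥ zstar j - (if i = j then (1:ℝ) else 0)| ≤ 1 / (2 * r)) :
    ∃ Ztil : Matrix (Fin m) (Fin r) ℝ,
      Ztilᵀ * Ztil = 1 ∧
      LinearMap.range Ztil.mulVecLin =
        LinearMap.range (Matrix.of fun k j => zstar j k).mulVecLin ∧
      Matrix.trace (K⁻¹ * (Ztil * Ztilᵀ)) ≤ 2 * r * ρ^2 := by
  obtain rfl : K = gram ℝ φ := Matrix.ext hK
  set Z : Matrix (Fin m) (Fin r) ℝ := Matrix.of fun k j => zstar j k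
  have hGhalf : (Zᵀ * Z - (1 / 2 : ℝ) • 1).PosSemidef := by
    refine posSemidef_sub_smul_one_of_abs_sub_one_le (ε := 1 / (2 * r))
      (posSemidef_conjTranspose_mul_self Z).isHermitian (fun i j => ?_) ?_
    · simpa [Z, mul_apply, dotProduct, one_apply, mul_comm] using hCm i j
    · rcases r.eq_zero_or_pos with rfl | hr
      · norm_num
      · simp only [Fintype.card_fin]; field_simp; norm_num
  have hG : (Zᵀ * Z).PosDef := by
    simpa using PosDef.posSemidef_add hGhalf (PosDef.one.smul (by norm_num : (0:ℝ) < 1 / 2))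
  obtain ⟨Q, hQQ, hrange, hQQt⟩ := exists_orthonormal_columns hG
  have hM : (Zᵀ * (gram ℝ φ)⁻¹ * Z).PosSemidef := by
    simpa using hKpd.inv.posSemidef.conjTranspose_mul_mul_same Z
  refine ⟨Q, hQQ, hrange, ?_⟩
  calc ((gram ℝ φ)⁻¹ * (Q * Qᵀ)).trace = ((Zᵀ * Z)⁻¹ * (Zᵀ * (gram ℝ φ)⁻¹ * Z)).trace := by
        rw [hQQt, Matrix.mul_assoc Z, trace_mul_cycle']
        simp only [Matrix.mul_assoc]
    _ ≤ 2 * (Zᵀ * (gram ℝ φ)⁻¹ * Z).trace := by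
        linarith [hG.mul_trace_inv_mul_le hGhalf hM]
    _ ≤ 2 * ∑ j, ‖fstar j‖ ^ 2 := by
        gcongr
        exact trace_transpose_mul_inv_gram_mul_le hKpd.det_pos.ne'.isUnit fun k j => hz j k
    _ ≤ 2 * ∑ _j : Fin r, ρ ^ 2 := by gcongr with j; exact hfnorm j
    _ = 2 * r * ρ ^ 2 := by simp [mul_assoc]

/-- Lemma 3 of the paper: existence of a feasible orthonormal version of `Z*`.
`H` is a Hilbert space of functions embedded in `L²`, `Φ f = (⟪φ₁,f⟫, …, ⟪φ_m,f⟫)` with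
`φⱼ ∈ H` linearly independent and `K i j = ⟪φᵢ,φⱼ⟫` positive definite, `r ≤ m`, `ρ > 0`.
If `f*₁,…,f*_r ∈ H` satisfy `‖f*ⱼ‖_H ≤ ρ` and the vectors `z*ⱼ = Φ f*ⱼ` satisfy
`C_m(f*) = max_{i,j} |⟪z*ᵢ, z*ⱼ⟫ − δ_ij| ≤ 1/(2r)`, then there is `Z̃* ∈ ℝ^{m×r}` with
orthonormal columns, the same column span as `Z* = (z*₁ … z*_r)`, and
`tr(K⁻¹ Z̃* (Z̃*)ᵀ) ≤ 2 r ρ²`. -/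
theorem sampled_fpca_feasible_orthonormal_version
    {H : Type*} [NormedAddCommGroup H] [InnerProductSpace ℝ H]
    {m r : ℕ} (hrm : r ≤ m)
    (φ : Fin m → H) (hφ : LinearIndependent ℝ φ)
    (K : Matrix (Fin m) (Fin m) ℝ) (hK : ∀ i j, K i j = ⟪φ i, φ j⟫) (hKpd : K.PosDef)
    (ρ : ℝ) (hρ : 0 < ρ)
    (fstar : Fin r → H) (hfnorm : ∀ j, ‖fstar j‖ ≤ ρ)
    (zstar : Fin r → Fin m → ℝ) (hz : ∀ j k, zstar j k = ⟪φ k, fstar j⟫)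
    (hCm : ∀ i j, |zstar i ⬝ᵥ zstar j - (if i = j then (1:ℝ) else 0)| ≤ 1 / (2 * r)) :
    ∃ Ztil : Matrix (Fin m) (Fin r) ℝ,
      Ztilᵀ * Ztil = 1 ∧
      LinearMap.range Ztil.mulVecLin =
        LinearMap.range (Matrix.of fun k j => zstar j k).mulVecLin ∧
      Matrix.trace (K⁻¹ * (Ztil * Ztilᵀ)) ≤ 2 * r * ρ^2 :=
  sampled_fpca_feasible_orthonormal_version_general φ K hK hKpd ρ fstar hfnorm zstar hz hCm
end

section
/- Suppose Θ ⪯ c₀K² in the positive semidefinite order for some constant c₀ > 0, where Θ ∈ ℝ^{m×m} has entries Θ_ij = ⟨φ_i, φ_j⟩_{L²}. Then for all ε, ν > 0, the quantity r_Φ(ε; ν) := sup{ ‖f‖²_{L²} : f ∈ H, ‖f‖_H² ≤ ν², ‖Φf‖₂² ≤ ε² } satisfies r_Φ(ε; ν) ≤ 2c₀ ε² + 2ν² N_m(Φ). -/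
open scoped RealInnerProductSpace BigOperators
open Matrix Submodule

/-!
Split `f = p + q` with `p` the `H`-orthogonal projection of `f` onto `span φ` and `q ∈ Ker Φ`.
Since `‖q‖_H ≤ ‖f‖_H ≤ ν`, homogeneity gives `‖q‖²_{L²} ≤ ν² N_m(Φ)`. Writing `p = ∑ aᵢ φᵢ`,
we have `Φf = Φp = K a` and `‖p‖²_{L²} = aᵀ Θ a ≤ c₀ aᵀ K² a = c₀ ‖Φf‖² ≤ c₀ ε²`.
Finally `‖f‖² ≤ 2‖p‖² + 2‖q‖²` in `L²`.
-/

theorem mem_orthogonal_span_range_iff {E : Type*} [NormedAddCommGroup E]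
    [InnerProductSpace ℝ E] {n : Type*} {v : n → E} {g : E} :
    g ∈ (span ℝ (Set.range v))ᗮ ↔ ∀ i, ⟪v i, g⟫ = 0 := by
  refine ⟨fun hg i ↦ hg _ (subset_span (Set.mem_range_self i)), fun hg u hu ↦ ?_⟩
  induction hu using span_induction with
  | mem _ hx => obtain ⟨i, rfl⟩ := hx; exact hg i
  | zero => exact inner_zero_left g
  | add _ _ _ _ hx hy => rw [inner_add_left, hx, hy, add_zero]
  | smul a _ _ hx => rw [real_inner_smul_left, hx, mul_zero]

section UnitBallSup

variable {E F : Type*} [NormedAddCommGroup E] [NormedSpace ℝ E]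
  [SeminormedAddCommGroup F] [NormedSpace ℝ F] (T : E →L[ℝ] F) (V : Submodule ℝ E)

theorem bddAbove_sq_norm_apply_unitBall :
    BddAbove {t : ℝ | ∃ g ∈ V, ‖g‖ ≤ 1 ∧ t = ‖T g‖ ^ 2} := by
  refine ⟨‖T‖ ^ 2, ?_⟩
  rintro _ ⟨g, -, hg, rfl⟩
  gcongr
  simpa using T.le_of_opNorm_le_of_le le_rfl hg

theorem sSup_sq_norm_apply_unitBall_nonneg :
    0 ≤ sSup {t : ℝ | ∃ g ∈ V, ‖g‖ ≤ 1 ∧ t = ‖T g‖ ^ 2} :=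
  Real.sSup_nonneg fun _ ⟨_, _, _, ht⟩ ↦ ht ▸ sq_nonneg _

theorem sq_norm_apply_le_sq_norm_mul_sSup {x : E} (hx : x ∈ V) :
    ‖T x‖ ^ 2 ≤ ‖x‖ ^ 2 * sSup {t : ℝ | ∃ g ∈ V, ‖g‖ ≤ 1 ∧ t = ‖T g‖ ^ 2} := by
  rcases eq_or_ne x 0 with rfl | hx₀
  · simp
  set u : E := (‖x‖⁻¹ : ℝ) • x
  have hu : ‖T u‖ ^ 2 ≤ sSup {t : ℝ | ∃ g ∈ V, ‖g‖ ≤ 1 ∧ t = ‖T g‖ ^ 2} :=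
    le_csSup (bddAbove_sq_norm_apply_unitBall T V)
      ⟨u, V.smul_mem _ hx, (norm_smul_inv_norm hx₀).le, rfl⟩
  have hxu : T x = ‖x‖ • T u := by
    rw [← T.map_smul, smul_inv_smul₀ (norm_ne_zero_iff.2 hx₀)]
  rw [hxu, norm_smul, Real.norm_of_nonneg (norm_nonneg x), mul_pow]
  gcongr

end UnitBallSup

section QuadraticForm

variable {n R : Type*} [Fintype n] [CommRing R] [PartialOrder R] [IsOrderedRing R]
  [StarRing R] [TrivialStar R]

theorem Matrix.PosSemidef.dotProduct_mulVec_le {A B : Matrix n n R} (h : (A - B).PosSemidef)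
    (x : n → R) : x ⬝ᵥ B *ᵥ x ≤ x ⬝ᵥ A *ᵥ x := by
  have := h.dotProduct_mulVec_nonneg x
  rwa [star_trivial, sub_mulVec, dotProduct_sub, sub_nonneg] at this

omit [PartialOrder R] [IsOrderedRing R] [StarRing R] [TrivialStar R] in
theorem Matrix.dotProduct_mul_self_mulVec_of_isSymm {K : Matrix n n R} (hK : K.IsSymm)
    (x : n → R) : x ⬝ᵥ (K * K) *ᵥ x = K *ᵥ x ⬝ᵥ K *ᵥ x := by
  rw [← mulVec_mulVec, dotProduct_mulVec, ← mulVec_transpose, hK.eq]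

end QuadraticForm

section Gram

variable {n E : Type*} [Fintype n] [NormedAddCommGroup E] [InnerProductSpace ℝ E]

theorem Matrix.gram_mulVec_apply (v : n → E) (a : n → ℝ) (j : n) :
    (gram ℝ v *ᵥ a) j = ⟪v j, ∑ i, a i • v i⟫ := by
  simp [mulVec, dotProduct, inner_sum, real_inner_smul_right, mul_comm]

theorem Matrix.dotProduct_gram_mulVec_self (v : n → E) (a : n → ℝ) :
    a ⬝ᵥ gram ℝ v *ᵥ a = ‖∑ i, a i • v i‖ ^ 2 := by
  rw [← real_inner_self_eq_norm_sq, ← star_dotProduct_gram_mulVec, star_trivial]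

theorem sq_norm_apply_le_of_posSemidef_smul_gram_mul_gram_sub {F : Type*} [NormedAddCommGroup F]
    [InnerProductSpace ℝ F] (v : n → E) (T : E →L[ℝ] F) {c : ℝ}
    (h : (c • (gram ℝ v * gram ℝ v) - gram ℝ (T ∘ v)).PosSemidef)
    {p : E} (hp : p ∈ span ℝ (Set.range v)) :
    ‖T p‖ ^ 2 ≤ c * ∑ j, ⟪v j, p⟫ ^ 2 := by
  obtain ⟨a, rfl⟩ := (mem_span_range_iff_exists_fun ℝ).1 hp
  calc ‖T (∑ i, a i • v i)‖ ^ 2 = a ⬝ᵥ gram ℝ (T ∘ v) *ᵥ a := by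
        simp [dotProduct_gram_mulVec_self]
    _ ≤ a ⬝ᵥ (c • (gram ℝ v * gram ℝ v)) *ᵥ a := h.dotProduct_mulVec_le a
    _ = c * (gram ℝ v *ᵥ a ⬝ᵥ gram ℝ v *ᵥ a) := by
        rw [smul_mulVec, dotProduct_smul, smul_eq_mul, dotProduct_mul_self_mulVec_of_isSymm
          (isHermitian_iff_isSymm.1 (isHermitian_gram ℝ v))]
    _ = c * ∑ j, ⟪v j, ∑ i, a i • v i⟫ ^ 2 := by
        simp only [dotProduct, gram_mulVec_apply, sq]

end Gram

theorem sampled_fpca_residual_bound_general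
    {H : Type*} [NormedAddCommGroup H] [InnerProductSpace ℝ H]
    {L : Type*} [NormedAddCommGroup L] [InnerProductSpace ℝ L]
    (ι : H →L[ℝ] L)
    {m : ℕ} (φ : Fin m → H)
    (K Θ : Matrix (Fin m) (Fin m) ℝ)
    (hK : ∀ i j, K i j = ⟪φ i, φ j⟫)
    (hΘ : ∀ i j, Θ i j = ⟪ι (φ i), ι (φ j)⟫)
    (c₀ : ℝ) (hc₀ : 0 < c₀)
    (hB1 : (c₀ • (K * K) - Θ).PosSemidef) :
    ∀ ε ν : ℝ, 0 < ε → 0 < ν →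
      ∀ f : H, ‖f‖^2 ≤ ν^2 → (∑ j, (⟪φ j, f⟫ : ℝ)^2) ≤ ε^2 →
        ‖ι f‖^2 ≤ 2 * c₀ * ε^2 +
          2 * ν^2 * sSup { x : ℝ | ∃ g : H, (∀ j, (⟪φ j, g⟫ : ℝ) = 0) ∧ ‖g‖ ≤ 1 ∧
            x = ‖ι g‖^2 } := by
  intro ε ν _ _ f hfH hfΦ
  obtain rfl : K = gram ℝ φ := Matrix.ext hK
  obtain rfl : Θ = gram ℝ (ι ∘ φ) := Matrix.ext hΘ
  have := FiniteDimensional.span_of_finite ℝ (Set.finite_range φ)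
  set S := span ℝ (Set.range φ)
  set p := S.starProjection f
  set q := Sᗮ.starProjection f
  have hqS : q ∈ Sᗮ := Sᗮ.starProjection_apply_mem f
  have hΦp : ∀ j, ⟪φ j, p⟫ = ⟪φ j, f⟫ := fun j ↦ by
    rw [← S.starProjection_add_starProjection_orthogonal f, inner_add_right,
      mem_orthogonal_span_range_iff.1 hqS j, add_zero]
  have hιp : ‖ι p‖ ^ 2 ≤ c₀ * ε ^ 2 := calc
    ‖ι p‖ ^ 2 ≤ c₀ * ∑ j, ⟪φ j, p⟫ ^ 2 := sq_norm_apply_le_of_posSemidef_smul_gram_mul_gram_sub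
        φ ι hB1 (S.starProjection_apply_mem f)
    _ ≤ c₀ * ε ^ 2 := by simp only [hΦp]; gcongr
  have hq : ‖q‖ ^ 2 ≤ ν ^ 2 := by grw [Sᗮ.norm_starProjection_apply_le f]; exact hfH
  have hιq := (sq_norm_apply_le_sq_norm_mul_sSup ι Sᗮ hqS).trans
    (mul_le_mul_of_nonneg_right hq (sSup_sq_norm_apply_unitBall_nonneg ι Sᗮ))
  simp only [S, mem_orthogonal_span_range_iff] at hιq
  calc ‖ι f‖ ^ 2 = ‖ι p + ι q‖ ^ 2 := by
        rw [← map_add, S.starProjection_add_starProjection_orthogonal]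
    _ ≤ (‖ι p‖ + ‖ι q‖) ^ 2 := by gcongr; exact norm_add_le _ _
    _ ≤ 2 * (‖ι p‖ ^ 2 + ‖ι q‖ ^ 2) := add_sq_le
    _ ≤ 2 * c₀ * ε ^ 2 + 2 * ν ^ 2 * _ := by linarith

/-- Lemma "REMAIN" of the paper.
`H` is a Hilbert space of functions embedded (via `ι`) in `L²` (modelled by a Hilbert
space `L`), `Φ f = (⟪φ₁,f⟫, …, ⟪φ_m,f⟫)` with `φⱼ` linearly independent,
`K i j = ⟪φᵢ,φⱼ⟫_H` positive definite, `Θ i j = ⟪φᵢ,φⱼ⟫_{L²}`, and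
`N_m(Φ) = sup{ ‖f‖²_{L²} : f ∈ Ker Φ, ‖f‖_H ≤ 1 }`.  Under condition (B1), `Θ ⪯ c₀ K²`
with `c₀ > 0`, for all `ε, ν > 0`:
`r_Φ(ε; ν) = sup{ ‖f‖²_{L²} : ‖f‖_H² ≤ ν², ‖Φf‖₂² ≤ ε² } ≤ 2c₀ ε² + 2ν² N_m(Φ)`,
i.e. every such `f` satisfies `‖f‖²_{L²} ≤ 2c₀ ε² + 2ν² N_m(Φ)`. -/
theorem sampled_fpca_residual_bound
    {H : Type*} [NormedAddCommGroup H] [InnerProductSpace ℝ H]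
    {L : Type*} [NormedAddCommGroup L] [InnerProductSpace ℝ L]
    (ι : H →L[ℝ] L) (hι : Function.Injective ι)
    {m : ℕ} (φ : Fin m → H) (hφ : LinearIndependent ℝ φ)
    (K Θ : Matrix (Fin m) (Fin m) ℝ)
    (hK : ∀ i j, K i j = ⟪φ i, φ j⟫)
    (hΘ : ∀ i j, Θ i j = ⟪ι (φ i), ι (φ j)⟫)
    (hKpd : K.PosDef)
    (c₀ : ℝ) (hc₀ : 0 < c₀)
    (hB1 : (c₀ • (K * K) - Θ).PosSemidef) :
    ∀ ε ν : ℝ, 0 < ε → 0 < ν →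
      ∀ f : H, ‖f‖^2 ≤ ν^2 → (∑ j, (⟪φ j, f⟫ : ℝ)^2) ≤ ε^2 →
        ‖ι f‖^2 ≤ 2 * c₀ * ε^2 +
          2 * ν^2 * sSup { x : ℝ | ∃ g : H, (∀ j, (⟪φ j, g⟫ : ℝ) = 0) ∧ ‖g‖ ≤ 1 ∧
            x = ‖ι g‖^2 } :=
  sampled_fpca_residual_bound_general ι φ K Θ hK hΘ c₀ hc₀ hB1
end

section
/- Under the spiked functional model with conditions (A1)–(A4) (κ sufficiently small), there exist universal constants C, c₃ > 0 such that σ_m² Σ_{j=1}^r n⁻¹‖W ê_j‖₂² ≤ C κ { ‖Ê‖²_HS + ε_{m,n}² } with probability at least 1 − c₃ exp( −κ² r⁻² n ε_{m,n}²/(2σ_m²) ). -/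
/-!
On the event that the Gaussian noise matrix `W` has operator norm at most `4t`, every column
satisfies `‖W êⱼ‖² ≤ 16t² ‖êⱼ‖²`, so the quadratic term is at most
`σ_m² n⁻¹ 16t² ‖Ê‖²_HS`. With `a = κn/σ_m²` and `b = κε²/(4r²)`, the choice `t² = 4a(3 + b)`
turns this into `64κ(3 + b)‖Ê‖²_HS ≤ 192κ(‖Ê‖²_HS + ε²)`, because `‖Ê‖²_HS ≤ 4r` (both `Ẑ` and
`Z̃*` have orthonormal columns) and `κ ≤ r`.

The operator norm is controlled by `1/2`-nets of the two unit spheres, of sizes at most `8ⁿ` and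
`8ᵐ` by a volume argument: if `⟪u, W v⟫ ≤ t` on all net points then `‖W‖ ≤ 4t`, and each
`⟪u, W v⟫` is a standard Gaussian, so a union bound gives failure probability at most
`8ⁿ 8ᵐ exp(-t²/2) ≤ exp(3(n + m) - 2a(3 + b))`. Condition (A3), read at a level below every
`rρ²μ̂ⱼ`, gives `mσ_m² ≤ κn`, and (A1) gives `σ_m² ≤ κ`; hence `n + m ≤ 2a` and the failure
probability is at most `exp(-2ab) = exp(-κ²nε²/(2r²σ_m²))`.
-/

open scoped RealInnerProductSpace BigOperators ENNReal
open MeasureTheory ProbabilityTheory Matrix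

noncomputable section

/-- Squared Frobenius (Hilbert–Schmidt) norm of a matrix. -/
def sqFrob {m r : ℕ} (A : Matrix (Fin m) (Fin r) ℝ) : ℝ := ∑ i, ∑ j, (A i j)^2

open scoped NNReal

section Frobenius

variable {m r : ℕ}

lemma sqFrob_nonneg (A : Matrix (Fin m) (Fin r) ℝ) : 0 ≤ sqFrob A := by
  unfold sqFrob
  positivity

lemma sqFrob_eq_trace_transpose_mul (A : Matrix (Fin m) (Fin r) ℝ) :
    sqFrob A = trace (Aᵀ * A) := by
  simp only [sqFrob, trace, diag, mul_apply, transpose_apply, sq]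
  exact Finset.sum_comm

lemma sqFrob_of_transpose_mul_self_eq_one {A : Matrix (Fin m) (Fin r) ℝ} (hA : Aᵀ * A = 1) :
    sqFrob A = r := by
  rw [sqFrob_eq_trace_transpose_mul, hA, trace_one, Fintype.card_fin]

lemma sqFrob_sub_le (A B : Matrix (Fin m) (Fin r) ℝ) :
    sqFrob (A - B) ≤ 2 * (sqFrob A + sqFrob B) := by
  simp only [sqFrob, Matrix.sub_apply, ← Finset.sum_add_distrib, Finset.mul_sum]
  gcongr with i _ j _
  nlinarith [sq_nonneg (A i j + B i j)]

lemma sqFrob_sub_le_of_transpose_mul_self_eq_one {A B : Matrix (Fin m) (Fin r) ℝ}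
    (hA : Aᵀ * A = 1) (hB : Bᵀ * B = 1) : sqFrob (A - B) ≤ 4 * r := by
  have := sqFrob_sub_le A B
  rw [sqFrob_of_transpose_mul_self_eq_one hA, sqFrob_of_transpose_mul_self_eq_one hB] at this
  linarith

lemma sqFrob_eq_sum_dotProduct_col (E : Matrix (Fin m) (Fin r) ℝ) :
    sqFrob E = ∑ j, (fun a => E a j) ⬝ᵥ (fun a => E a j) := by
  simp only [sqFrob, dotProduct, sq]
  exact Finset.sum_comm

lemma sum_dotProduct_mulVec_col_le {n : ℕ} {A : Matrix (Fin n) (Fin m) ℝ} {c : ℝ}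
    (hA : ∀ x, (A *ᵥ x) ⬝ᵥ (A *ᵥ x) ≤ c * (x ⬝ᵥ x)) (E : Matrix (Fin m) (Fin r) ℝ) :
    ∑ j, (A *ᵥ fun a => E a j) ⬝ᵥ (A *ᵥ fun a => E a j) ≤ c * sqFrob E := by
  rw [sqFrob_eq_sum_dotProduct_col, Finset.mul_sum]
  exact Finset.sum_le_sum fun j _ => hA _

lemma noise_term_le_of_dotProduct_mulVec_le {n : ℕ} (hn : 0 < n) (hr : 0 < r)
    {W : Matrix (Fin n) (Fin m) ℝ} {E : Matrix (Fin m) (Fin r) ℝ} {σ κ ε : ℝ} (hσ : 0 < σ)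
    (hκ : 0 ≤ κ) (hκr : κ ≤ r)
    (hE : sqFrob E ≤ 4 * r)
    (hW : ∀ x, (W *ᵥ x) ⬝ᵥ (W *ᵥ x) ≤
      64 * (κ * n / σ ^ 2) * (3 + κ * ε ^ 2 / (4 * r ^ 2)) * (x ⬝ᵥ x)) :
    σ ^ 2 * ∑ j, (n : ℝ)⁻¹ * ((W *ᵥ fun a => E a j) ⬝ᵥ (W *ᵥ fun a => E a j)) ≤
      192 * κ * (sqFrob E + ε ^ 2) := by
  have hr : (0 : ℝ) < r := Nat.cast_pos.mpr hr
  set b := κ * ε ^ 2 / (4 * r ^ 2) with hb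
  have hbE : b * sqFrob E ≤ ε ^ 2 :=
    calc b * sqFrob E ≤ b * (4 * r) := by gcongr
      _ = κ / r * ε ^ 2 := by
        rw [hb]
        field_simp
      _ ≤ ε ^ 2 := mul_le_of_le_one_left (sq_nonneg _) ((div_le_one hr).mpr hκr)
  have hE0 := sqFrob_nonneg E
  calc σ ^ 2 * ∑ j, (n : ℝ)⁻¹ * ((W *ᵥ fun a => E a j) ⬝ᵥ (W *ᵥ fun a => E a j))
      = σ ^ 2 / n * ∑ j, (W *ᵥ fun a => E a j) ⬝ᵥ (W *ᵥ fun a => E a j) := by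
        rw [← Finset.mul_sum]
        ring
    _ ≤ σ ^ 2 / n * (64 * (κ * n / σ ^ 2) * (3 + b) * sqFrob E) := by
        gcongr
        exact sum_dotProduct_mulVec_col_le hW E
    _ = 64 * κ * (3 + b) * sqFrob E := by
        field_simp
    _ ≤ 192 * κ * (sqFrob E + ε ^ 2) := by nlinarith

end Frobenius

lemma Matrix.IsHermitian.eigenvalues_pos_of_eq_inner {ι E : Type*} [Fintype ι] [DecidableEq ι]
    [NormedAddCommGroup E] [InnerProductSpace ℝ E] {K : Matrix ι ι ℝ} (hK : K.IsHermitian)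
    {φ : ι → E} (hKφ : ∀ i j, K i j = ⟪φ i, φ j⟫) (hφ : LinearIndependent ℝ φ) (i : ι) :
    0 < hK.eigenvalues i :=
  ((Matrix.ext hKφ : K = gram ℝ φ) ▸ posDef_gram_of_linearIndependent hφ).eigenvalues_pos i

lemma card_mul_sq_le_sq_of_mul_sqrt_sum_min_le {ι : Type*} [Fintype ι] {c : ι → ℝ}
    (hc : ∀ i, 0 < c i) {A B : ℝ} (hA : 0 ≤ A)
    (h : ∀ t, 0 < t → A * Real.sqrt (∑ i, min (t ^ 2) (c i)) ≤ B * t) :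
    Fintype.card ι * A ^ 2 ≤ B ^ 2 := by
  rcases isEmpty_or_nonempty ι with hι | hι
  · simpa using sq_nonneg B
  obtain ⟨i₀, -, hi₀⟩ := Finset.exists_min_image Finset.univ c Finset.univ_nonempty
  set t := Real.sqrt (c i₀)
  have ht : 0 < t := Real.sqrt_pos.mpr (hc i₀)
  have hsum : ∑ i, min (t ^ 2) (c i) = Fintype.card ι * t ^ 2 := by
    rw [Real.sq_sqrt (hc i₀).le,
      Finset.sum_congr rfl fun i _ => min_eq_left (hi₀ i (Finset.mem_univ i)),
      Finset.sum_const, Finset.card_univ, nsmul_eq_mul]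
  have hAB := h t ht
  rw [hsum, Real.sqrt_mul (Nat.cast_nonneg _), Real.sqrt_sq ht.le, ← mul_assoc,
    mul_le_mul_iff_of_pos_right ht] at hAB
  calc (Fintype.card ι : ℝ) * A ^ 2 = (A * Real.sqrt (Fintype.card ι)) ^ 2 := by
        rw [mul_pow, Real.sq_sqrt (Nat.cast_nonneg _)]
        ring
    _ ≤ B ^ 2 := pow_le_pow_left₀ (by positivity) hAB 2

lemma eight_pow_le_exp (d : ℕ) : (8 : ℝ) ^ d ≤ Real.exp (3 * d) := by
  rw [mul_comm, Real.exp_nat_mul]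
  gcongr
  linarith [Real.quadratic_le_exp_of_nonneg (x := 3) (by norm_num)]

lemma eight_pow_mul_eight_pow_mul_exp_le {n m r : ℕ} {σ κ ε : ℝ} (hσ : 0 < σ)
    (hσκ : σ ^ 2 ≤ κ) (hmσ : m * σ ^ 2 ≤ κ * n) :
    8 ^ n * 8 ^ m * Real.exp (-(4 * (κ * n / σ ^ 2) * (3 + κ * ε ^ 2 / (4 * r ^ 2))) / 2) ≤
      Real.exp (-κ ^ 2 * ((r : ℝ) ^ 2)⁻¹ * n * ε ^ 2 / (2 * σ ^ 2)) := by
  set a := κ * n / σ ^ 2 with ha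
  set b := κ * ε ^ 2 / (4 * r ^ 2) with hb
  have hnm : (n + m : ℝ) ≤ 2 * a := by
    have : (n : ℝ) ≤ a := by
      rw [ha, le_div_iff₀ (by positivity)]
      nlinarith [n.cast_nonneg (α := ℝ)]
    have : (m : ℝ) ≤ a := by rw [ha, le_div_iff₀ (by positivity)]; linarith
    linarith
  calc 8 ^ n * 8 ^ m * Real.exp (-(4 * a * (3 + b)) / 2)
      ≤ Real.exp (3 * n) * Real.exp (3 * m) * Real.exp (-(4 * a * (3 + b)) / 2) := by
        gcongr <;> exact eight_pow_le_exp _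
    _ = Real.exp (3 * (n + m) - 6 * a - 2 * a * b) := by
        rw [← Real.exp_add, ← Real.exp_add]
        congr 1
        ring
    _ ≤ Real.exp (-(2 * a * b)) := Real.exp_le_exp.mpr (by linarith)
    _ = _ := by
        rw [ha, hb]
        congr 1
        ring

section Nets

open Metric Module

variable {E : Type*} [NormedAddCommGroup E] [NormedSpace ℝ E] [FiniteDimensional ℝ E]

lemma card_le_of_isSeparated_sphere {F : Finset E} (hF : ↑F ⊆ sphere (0 : E) 1)
    (hsep : IsSeparated ((1 / 2 : ℝ≥0) : ℝ≥0∞) (F : Set E)) :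
    (F.card : ℝ) ≤ 8 ^ finrank ℝ E := by
  borelize E
  set μ : Measure E := Measure.addHaar
  -- the balls of radius `1/4` around the points of `F` are disjoint and lie in `ball 0 2`
  have hdisj : (F : Set E).PairwiseDisjoint fun a => ball a (1 / 4) := by
    intro a ha b hb hab
    have hab : ((1 / 2 : ℝ≥0) : ℝ≥0∞) < edist a b := hsep ha hb hab
    rw [edist_nndist, ENNReal.coe_lt_coe, ← NNReal.coe_lt_coe, coe_nndist] at hab
    exact ball_disjoint_ball (by norm_num at hab; linarith)
  have hsub : ∀ a ∈ F, ball a (1 / 4) ⊆ ball (0 : E) 2 := fun a ha =>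
    ball_subset_ball' (by rw [dist_zero_right, mem_sphere_zero_iff_norm.mp (hF ha)]; norm_num)
  have hvol : (F.card : ℝ≥0∞) * ENNReal.ofReal ((1 / 4) ^ finrank ℝ E) * μ (ball 0 1)
      ≤ ENNReal.ofReal (2 ^ finrank ℝ E) * μ (ball 0 1) :=
    calc (F.card : ℝ≥0∞) * ENNReal.ofReal ((1 / 4) ^ finrank ℝ E) * μ (ball 0 1)
        = ∑ a ∈ F, μ (ball a (1 / 4)) := by
          rw [Finset.sum_congr rfl fun a _ => Measure.addHaar_ball_of_pos μ a
            (by norm_num : (0 : ℝ) < 1 / 4), Finset.sum_const, nsmul_eq_mul, mul_assoc]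
      _ = μ (⋃ a ∈ F, ball a (1 / 4)) :=
          (measure_biUnion_finset hdisj fun _ _ => measurableSet_ball).symm
      _ ≤ μ (ball 0 2) := measure_mono (Set.iUnion₂_subset hsub)
      _ = _ := Measure.addHaar_ball_of_pos μ _ two_pos
  rw [ENNReal.mul_le_mul_iff_left (measure_ball_pos μ 0 one_pos).ne' measure_ball_lt_top.ne,
    ← ENNReal.ofReal_natCast, ← ENNReal.ofReal_mul (by positivity),
    ENNReal.ofReal_le_ofReal_iff (by positivity)] at hvol
  calc (F.card : ℝ) = F.card * (1 / 4) ^ finrank ℝ E * 4 ^ finrank ℝ E := by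
        rw [mul_assoc, ← mul_pow]
        norm_num
    _ ≤ 2 ^ finrank ℝ E * 4 ^ finrank ℝ E := by gcongr
    _ = 8 ^ finrank ℝ E := by
        rw [← mul_pow]
        norm_num

lemma packingNumber_sphere_le :
    packingNumber (1 / 2) (sphere (0 : E) 1) ≤ 8 ^ finrank ℝ E := by
  refine iSup₂_le fun C hC => iSup_le fun hsep => ?_
  by_contra! hlt
  -- otherwise `C` contains a finite subset of size `8 ^ d + 1`
  obtain ⟨D, hDC, hD⟩ := Set.exists_subset_encard_eq (Order.add_one_le_of_lt hlt)
  have hDfin : D.Finite := Set.finite_of_encard_eq_coe (k := 8 ^ finrank ℝ E + 1)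
    (by rw [hD]; push_cast; rfl)
  have hcard := card_le_of_isSeparated_sphere (F := hDfin.toFinset)
    (by simpa using hDC.trans hC) (hsep.subset (by simpa using hDC))
  rw [← Set.ncard_eq_toFinset_card D hDfin, Set.ncard_def, hD] at hcard
  have h8 : ((8 ^ finrank ℝ E + 1 : ℕ∞).toNat : ℝ) = 8 ^ finrank ℝ E + 1 := by norm_cast
  linarith

lemma exists_finset_isCover_sphere :
    ∃ N : Finset E, ↑N ⊆ sphere (0 : E) 1 ∧ (N.card : ℝ) ≤ 8 ^ finrank ℝ E ∧
      IsCover (1 / 2) (sphere (0 : E) 1) N := by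
  have hfin : packingNumber (1 / 2) (sphere (0 : E) 1) ≠ ⊤ :=
    (packingNumber_sphere_le.trans_lt (ENat.pow_lt_top_iff.mpr (.inl (by decide)))).ne
  have hS : (maximalSeparatedSet (1 / 2) (sphere (0 : E) 1)).Finite := by
    rw [← Set.encard_ne_top_iff, encard_maximalSeparatedSet hfin]
    exact hfin
  refine ⟨hS.toFinset, by simpa using maximalSeparatedSet_subset, ?_,
    by simpa using isCover_maximalSeparatedSet hfin⟩
  exact card_le_of_isSeparated_sphere (by simpa using maximalSeparatedSet_subset)
    (by simpa using isSeparated_maximalSeparatedSet (ε := 1 / 2) (A := sphere (0 : E) 1))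

end Nets

lemma Metric.IsCover.exists_norm_sub_le {E : Type*} [SeminormedAddCommGroup E] {N : Set E}
    (hN : IsCover (1 / 2) (sphere (0 : E) 1) N) {x : E} (hx : ‖x‖ = 1) :
    ∃ u ∈ N, ‖x - u‖ ≤ 1 / 2 := by
  obtain ⟨u, hu, hxu⟩ := hN (mem_sphere_zero_iff_norm.mpr hx)
  refine ⟨u, hu, ?_⟩
  have : nndist x u ≤ 1 / 2 := edist_le_coe.mp hxu
  rw [← dist_eq_norm, ← coe_nndist]
  exact_mod_cast this

section OpNormOfNets

open Metric

variable {E F : Type*} [NormedAddCommGroup E] [InnerProductSpace ℝ E]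
  [NormedAddCommGroup F] [InnerProductSpace ℝ F]

lemma norm_le_two_mul_of_isCover_sphere {N : Set E} (hN : IsCover (1 / 2) (sphere (0 : E) 1) N)
    {t : ℝ} (ht : 0 ≤ t) (y : E) (hy : ∀ u ∈ N, ⟪u, y⟫ ≤ t) : ‖y‖ ≤ 2 * t := by
  rcases eq_or_ne y 0 with rfl | hy0
  · simpa using ht
  have hnorm : 0 < ‖y‖ := norm_pos_iff.mpr hy0
  obtain ⟨u, hu, hclose⟩ := hN.exists_norm_sub_le (x := ‖y‖⁻¹ • y) (by
    rw [norm_smul, norm_inv, norm_norm, inv_mul_cancel₀ hnorm.ne'])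
  -- `⟪u, y⟫ = ‖y‖ - ⟪‖y‖⁻¹ • y - u, y⟫ ≥ ‖y‖ / 2`
  have hinner : ⟪‖y‖⁻¹ • y, y⟫ = ‖y‖ := by
    rw [real_inner_smul_left, real_inner_self_eq_norm_sq]
    field_simp
  have hdefect : ⟪‖y‖⁻¹ • y - u, y⟫ ≤ 1 / 2 * ‖y‖ :=
    (real_inner_le_norm _ _).trans (mul_le_mul_of_nonneg_right hclose hnorm.le)
  rw [inner_sub_left, hinner] at hdefect
  linarith [hy u hu]

lemma ContinuousLinearMap.opNorm_le_four_mul_of_isCover_sphere (f : E →L[ℝ] F) {NE : Set E}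
    {NF : Set F} (hNE : IsCover (1 / 2) (sphere (0 : E) 1) NE)
    (hNF : IsCover (1 / 2) (sphere (0 : F) 1) NF) {t : ℝ} (ht : 0 ≤ t)
    (h : ∀ u ∈ NF, ∀ v ∈ NE, ⟪u, f v⟫ ≤ t) : ‖f‖ ≤ 4 * t := by
  suffices ‖f‖ ≤ 2 * t + ‖f‖ / 2 by linarith
  refine f.opNorm_le_of_unit_norm (by positivity) fun x hx => ?_
  obtain ⟨v, hv, hclose⟩ := hNE.exists_norm_sub_le hx
  calc ‖f x‖ = ‖f v + f (x - v)‖ := by rw [← map_add, add_sub_cancel]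
    _ ≤ ‖f v‖ + ‖f‖ * ‖x - v‖ := norm_add_le_of_le le_rfl (f.le_opNorm _)
    _ ≤ 2 * t + ‖f‖ * (1 / 2) := by
        gcongr
        exact norm_le_two_mul_of_isCover_sphere hNF ht _ fun u hu => h u hu v hv
    _ = 2 * t + ‖f‖ / 2 := by ring

end OpNormOfNets

section Gaussian

variable {Ω : Type*} [MeasurableSpace Ω] {P : Measure Ω}

lemma hasSubgaussianMGF_of_map_eq_gaussianReal {X : Ω → ℝ} {v : ℝ≥0}
    (hX : P.map X = gaussianReal 0 v) : HasSubgaussianMGF X v P := by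
  have hXm : AEMeasurable X P := aemeasurable_of_map_neZero (by rw [hX]; infer_instance)
  refine (HasSubgaussianMGF.id_map_iff hXm).mp ?_
  rw [hX]
  exact ⟨integrable_exp_mul_gaussianReal, fun t => by simp [mgf_id_gaussianReal]⟩

lemma measure_le_sum_mul_le_of_gaussian [IsProbabilityMeasure P] {ι : Type*} [Fintype ι]
    {X : ι → Ω → ℝ} (hX : ∀ i, P.map (X i) = gaussianReal 0 1) (hindep : iIndepFun X P)
    (c : ι → ℝ) (hc : ∑ i, c i ^ 2 = 1) {t : ℝ} (ht : 0 ≤ t) :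
    P {ω | t ≤ ∑ i, c i * X i ω} ≤ ENNReal.ofReal (Real.exp (-t ^ 2 / 2)) := by
  have hsum := HasSubgaussianMGF.measure_sum_ge_le_of_iIndepFun
    (hindep.comp (fun i x => c i * x) fun i => measurable_const_mul (c i)) (s := Finset.univ)
    (fun i _ => (hasSubgaussianMGF_of_map_eq_gaussianReal (hX i)).const_mul (c i)) ht
  refine (ENNReal.le_ofReal_iff_toReal_le (measure_ne_top _ _) (Real.exp_pos _).le).mpr ?_
  convert hsum using 4
  · rfl
  · rw [NNReal.coe_sum]
    -- the sub-Gaussian parameter of `c i * X i` is `⟨c i ^ 2, _⟩ * 1`, which `simp` cannot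
    -- rewrite since it is typed as a subtype; its coercion is `c i ^ 2 * 1` by definition
    calc (2 : ℝ) = 2 * ∑ i, c i ^ 2 := by rw [hc, mul_one]
      _ = _ := congrArg _ (Finset.sum_congr rfl fun i _ => (mul_one (c i ^ 2)).symm)

end Gaussian

section GaussianMatrix

open Metric
open scoped Matrix.Norms.L2Operator

lemma dotProduct_mulVec_self_le {ι κ : Type*} [Fintype ι] [Fintype κ] [DecidableEq κ]
    (A : Matrix ι κ ℝ) (x : κ → ℝ) : (A *ᵥ x) ⬝ᵥ (A *ᵥ x) ≤ ‖A‖ ^ 2 * (x ⬝ᵥ x) := by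
  have h := pow_le_pow_left₀ (norm_nonneg _) (A.l2_opNorm_mulVec (WithLp.toLp 2 x)) 2
  rw [mul_pow, EuclideanSpace.real_norm_sq_eq, EuclideanSpace.real_norm_sq_eq] at h
  simpa [dotProduct, sq] using h

lemma inner_toEuclideanLin_apply {ι κ : Type*} [Fintype ι] [Fintype κ] [DecidableEq κ]
    (A : Matrix ι κ ℝ) (u : EuclideanSpace ℝ ι) (v : EuclideanSpace ℝ κ) :
    ⟪u, toEuclideanLin A v⟫ = ∑ q : ι × κ, u q.1 * v q.2 * A q.1 q.2 := by
  simp only [PiLp.inner_apply, toLpLin_apply, RCLike.inner_apply, conj_trivial,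
    Fintype.sum_prod_type, mulVec, dotProduct, Finset.sum_mul]
  exact Finset.sum_congr rfl fun i _ => Finset.sum_congr rfl fun k _ => by ring

variable {Ω : Type*} [MeasurableSpace Ω] {P : Measure Ω} [IsProbabilityMeasure P]

lemma measure_biUnion_le_sum_mul_le_of_gaussian {n m : ℕ} {G : Fin n → Fin m → Ω → ℝ}
    (hG : ∀ i k, P.map (G i k) = gaussianReal 0 1)
    (hindep : iIndepFun (fun q : Fin n × Fin m => G q.1 q.2) P) {t : ℝ} (ht : 0 ≤ t)
    {Nn : Finset (EuclideanSpace ℝ (Fin n))} (hNn : ∀ u ∈ Nn, ‖u‖ = 1)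
    {Nm : Finset (EuclideanSpace ℝ (Fin m))} (hNm : ∀ v ∈ Nm, ‖v‖ = 1) :
    P (⋃ u ∈ Nn, ⋃ v ∈ Nm, {ω | t ≤ ∑ q : Fin n × Fin m, u q.1 * v q.2 * G q.1 q.2 ω}) ≤
      Nn.card * Nm.card * ENNReal.ofReal (Real.exp (-t ^ 2 / 2)) := by
  have hunit : ∀ d (u : EuclideanSpace ℝ (Fin d)), ‖u‖ = 1 → ∑ i, u i ^ 2 = 1 :=
    fun d u hu => by rw [← EuclideanSpace.real_norm_sq_eq, hu, one_pow]
  calc _ ≤ ∑ u ∈ Nn, ∑ v ∈ Nm, P {ω | t ≤ ∑ q : Fin n × Fin m, u q.1 * v q.2 * G q.1 q.2 ω} :=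
        (measure_biUnion_finset_le _ _).trans
          (Finset.sum_le_sum fun u _ => measure_biUnion_finset_le _ _)
    _ ≤ ∑ u ∈ Nn, ∑ v ∈ Nm, ENNReal.ofReal (Real.exp (-t ^ 2 / 2)) := by
        refine Finset.sum_le_sum fun u hu => Finset.sum_le_sum fun v hv => ?_
        refine measure_le_sum_mul_le_of_gaussian (fun q : Fin n × Fin m => hG q.1 q.2)
          hindep _ ?_ ht
        simp only [Fintype.sum_prod_type, mul_pow]
        rw [← Finset.sum_mul_sum, hunit n u (hNn u hu), hunit m v (hNm v hv), one_mul]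
    _ = _ := by simp only [Finset.sum_const, nsmul_eq_mul, mul_assoc]

lemma one_sub_le_measure_l2_opNorm_le_of_gaussian {n m : ℕ} {G : Fin n → Fin m → Ω → ℝ}
    (hG : ∀ i k, P.map (G i k) = gaussianReal 0 1)
    (hindep : iIndepFun (fun q : Fin n × Fin m => G q.1 q.2) P) {t : ℝ} (ht : 0 ≤ t) :
    ENNReal.ofReal (1 - 8 ^ n * 8 ^ m * Real.exp (-t ^ 2 / 2)) ≤
      P {ω | ‖Matrix.of fun i k => G i k ω‖ ≤ 4 * t} := by
  obtain ⟨Nn, hNn, hNn_card, hNn_cover⟩ :=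
    exists_finset_isCover_sphere (E := EuclideanSpace ℝ (Fin n))
  obtain ⟨Nm, hNm, hNm_card, hNm_cover⟩ :=
    exists_finset_isCover_sphere (E := EuclideanSpace ℝ (Fin m))
  rw [finrank_euclideanSpace_fin] at hNn_card hNm_card
  set bad := ⋃ u ∈ Nn, ⋃ v ∈ Nm, {ω | t ≤ ∑ q : Fin n × Fin m, u q.1 * v q.2 * G q.1 q.2 ω}
  have hgood : badᶜ ⊆ {ω | ‖Matrix.of fun i k => G i k ω‖ ≤ 4 * t} := by
    intro ω hω
    simp only [bad, Set.mem_compl_iff, Set.mem_iUnion, Set.mem_ofPred_eq, not_exists,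
      not_le] at hω
    refine ContinuousLinearMap.opNorm_le_four_mul_of_isCover_sphere _ hNm_cover hNn_cover ht
      fun u hu v hv => ?_
    simpa [inner_toEuclideanLin_apply] using (hω u hu v hv).le
  have hbad : P bad ≤ ENNReal.ofReal (8 ^ n * 8 ^ m * Real.exp (-t ^ 2 / 2)) := by
    refine (measure_biUnion_le_sum_mul_le_of_gaussian hG hindep ht
      (fun u hu => mem_sphere_zero_iff_norm.mp (hNn hu))
      (fun v hv => mem_sphere_zero_iff_norm.mp (hNm hv))).trans ?_
    rw [ENNReal.ofReal_mul (by positivity), ENNReal.ofReal_mul (by positivity)]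
    gcongr
    · exact ENNReal.ofReal_natCast Nn.card ▸ ENNReal.ofReal_le_ofReal hNn_card
    · exact ENNReal.ofReal_natCast Nm.card ▸ ENNReal.ofReal_le_ofReal hNm_card
  calc ENNReal.ofReal (1 - 8 ^ n * 8 ^ m * Real.exp (-t ^ 2 / 2))
      = 1 - ENNReal.ofReal (8 ^ n * 8 ^ m * Real.exp (-t ^ 2 / 2)) := by
        rw [ENNReal.ofReal_sub _ (by positivity), ENNReal.ofReal_one]
    _ ≤ 1 - P bad := tsub_le_tsub_left hbad 1
    _ ≤ P badᶜ := by
        rw [tsub_le_iff_right, ← measure_univ (μ := P), ← Set.compl_union_self bad]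
        exact measure_union_le _ _
    _ ≤ _ := measure_mono hgood

lemma one_sub_le_measure_dotProduct_mulVec_le_of_gaussian {n m : ℕ}
    {G : Fin n → Fin m → Ω → ℝ} (hG : ∀ i k, P.map (G i k) = gaussianReal 0 1)
    (hindep : iIndepFun (fun q : Fin n × Fin m => G q.1 q.2) P) {t : ℝ} (ht : 0 ≤ t) :
    ENNReal.ofReal (1 - 8 ^ n * 8 ^ m * Real.exp (-t ^ 2 / 2)) ≤
      P {ω | ∀ x, (Matrix.of (fun i k => G i k ω) *ᵥ x) ⬝ᵥ (Matrix.of (fun i k => G i k ω) *ᵥ x)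
        ≤ (4 * t) ^ 2 * (x ⬝ᵥ x)} := by
  refine (one_sub_le_measure_l2_opNorm_le_of_gaussian hG hindep ht).trans
    (measure_mono fun ω hω x => (dotProduct_mulVec_self_le _ x).trans ?_)
  gcongr
  · simpa [dotProduct, sq] using Finset.sum_nonneg fun i _ => sq_nonneg (x i)
  · exact hω

end GaussianMatrix

/-- Lemma 11 of the paper: bounding the quadratic term `T₂`.
Under the spiked functional model with conditions (A1)–(A4) (`κ ≤ κ₀` sufficiently small),
there are universal constants `C, c₃ > 0` such that
`σ_m² Σⱼ n⁻¹ ‖W êⱼ‖₂² ≤ C κ {‖Ê‖²_HS + ε²}` with probability at least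
`1 − c₃ exp(−κ²r⁻²nε²/(2σ_m²))`. -/
theorem sampled_fpca_term_two_bound :
    ∃ κ₀ C c₃ : ℝ, 0 < κ₀ ∧ 0 < C ∧ 0 < c₃ ∧
    ∀ (m n r : ℕ), 0 < m → 0 < n → 0 < r →
    ∀ (H : Type) [inst : NormedAddCommGroup H] [inst2 : InnerProductSpace ℝ H]
      (L : Type) [instL : NormedAddCommGroup L] [instL2 : InnerProductSpace ℝ L]
      (ι : H →L[ℝ] L),
    Function.Injective ι →
    ∀ (φ : Fin m → H), LinearIndependent ℝ φ →
    ∀ (K : Matrix (Fin m) (Fin m) ℝ), (∀ i j, K i j = ⟪φ i, φ j⟫) →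
    ∀ (hHerm : K.IsHermitian) (μhat : Fin m → ℝ),
      (∃ g : Fin m ≃ Fin m, ∀ i, μhat i = hHerm.eigenvalues (g i)) →
      Antitone μhat →
    ∀ (ρ : ℝ), 0 < ρ →
    ∀ (fstar : Fin r → H),
      Orthonormal ℝ (fun j => ι (fstar j)) →
      (∀ j, ‖fstar j‖ ≤ ρ) →
    ∀ (s : Fin r → ℝ), Antitone s → (∀ j, 0 < s j) →
      (∀ h0 : 0 < r, s ⟨0, h0⟩ = 1) →
    ∀ (σm σ₀ κ : ℝ), 0 < σm → σm ≤ σ₀ → 0 < κ → κ ≤ κ₀ →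
    -- condition (A1)
    (∀ j, 1/2 ≤ (s j)^2) → σ₀^2 ≤ κ →
    ∀ (zstar : Fin r → Fin m → ℝ), (∀ j k, zstar j k = ⟪φ k, fstar j⟫) →
    -- condition (A2)
    (∀ i j, |zstar i ⬝ᵥ zstar j - (if i = j then (1:ℝ) else 0)| ≤ 1 / (2*r)) →
    ∀ (F : ℝ → ℝ), (∀ t, F t = Real.sqrt (∑ j, min (t^2) (r * ρ^2 * μhat j))) →
    -- condition (A3)
    (∀ t : ℝ, 0 < t → σm / Real.sqrt n * F t ≤ Real.sqrt κ * t) →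
    -- condition (A4)
    ((r:ℝ) ≤ (m:ℝ)/2 ∧ (r:ℝ) ≤ (n:ℝ)/4 ∧ (r:ℝ) ≤ κ * Real.sqrt n / σm) →
    ∀ (Ω : Type) [instΩ : MeasurableSpace Ω] (P : Measure Ω) [instP : IsProbabilityMeasure P]
      (β : Fin n → Fin r → Ω → ℝ) (w : Fin n → Fin m → Ω → ℝ),
      (∀ i j, Measurable (β i j)) → (∀ i k, Measurable (w i k)) →
      (∀ i j, Measure.map (β i j) P = gaussianReal 0 1) →
      (∀ i k, Measure.map (w i k) P = gaussianReal 0 1) →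
      iIndepFun
        (Sum.elim (fun q : Fin n × Fin r => β q.1 q.2)
          (fun q : Fin n × Fin m => w q.1 q.2)) P →
    ∀ (y : Fin n → Ω → Fin m → ℝ),
      (∀ i ω k, y i ω k = (∑ j, s j * β i j ω * ⟪φ k, fstar j⟫) + σm * w i k ω) →
    ∀ (Sig : Ω → Matrix (Fin m) (Fin m) ℝ),
      (∀ ω a b, Sig ω a b = (∑ i, y i ω a * y i ω b) / n) →
    ∀ (Zhat : Ω → Matrix (Fin m) (Fin r) ℝ),
      (∀ ω, (Zhat ω)ᵀ * Zhat ω = 1 ∧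
        Matrix.trace (K⁻¹ * (Zhat ω * (Zhat ω)ᵀ)) ≤ 2*r*ρ^2) →
      (∀ ω (Z : Matrix (Fin m) (Fin r) ℝ), Zᵀ * Z = 1 →
        Matrix.trace (K⁻¹ * (Z * Zᵀ)) ≤ 2*r*ρ^2 →
        Matrix.trace (Sig ω * (Z * Zᵀ)) ≤ Matrix.trace (Sig ω * (Zhat ω * (Zhat ω)ᵀ))) →
    -- Z̃*: orthonormal feasible version of Z*, properly aligned with Ẑ
    ∀ (Zs : Matrix (Fin m) (Fin r) ℝ), (∀ k j, Zs k j = zstar j k) →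
    ∀ (Ztil : Matrix (Fin m) (Fin r) ℝ),
      Ztilᵀ * Ztil = 1 →
      LinearMap.range Ztil.mulVecLin = LinearMap.range Zs.mulVecLin →
      Matrix.trace (K⁻¹ * (Ztil * Ztilᵀ)) ≤ 2*r*ρ^2 →
      (∀ ω, ∃ (Q : Matrix (Fin m) (Fin m) ℝ) (chat shat : Fin r → ℝ),
        Qᵀ * Q = 1 ∧
        (∀ j, chat j ∈ Set.Icc (0:ℝ) 1) ∧ (∀ j, shat j ∈ Set.Icc (0:ℝ) 1) ∧
        Antitone shat ∧ (∀ j, (chat j)^2 + (shat j)^2 = 1) ∧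
        (∀ i j, (Qᵀ * Ztil) i j = if (i : ℕ) = (j : ℕ) then 1 else 0) ∧
        (∀ i j, (Qᵀ * Zhat ω) i j =
          if (i : ℕ) = (j : ℕ) then chat j
          else if (i : ℕ) = (j : ℕ) + r then shat j else 0)) →
    ∀ (W : Ω → Matrix (Fin n) (Fin m) ℝ), (∀ ω i k, W ω i k = w i k ω) →
    ∀ (B : Ω → Matrix (Fin n) (Fin r) ℝ), (∀ ω i j, B ω i j = β i j ω) →
    ∀ (Wbar : Ω → Matrix (Fin m) (Fin r) ℝ),
      (∀ ω, Wbar ω = (n:ℝ)⁻¹ • ((W ω)ᵀ * B ω)) →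
    ∀ (Ehat : Ω → Matrix (Fin m) (Fin r) ℝ), (∀ ω, Ehat ω = Zhat ω - Ztil) →
    ∀ (εmn : ℝ),
      IsLeast {e : ℝ | 0 < e ∧
        σm / Real.sqrt n * Real.sqrt ((r:ℝ)^3) * F e ≤ κ * e^2} εmn →
    ENNReal.ofReal (1 - c₃ *
        Real.exp (-κ^2 * ((r:ℝ)^2)⁻¹ * n * εmn^2 / (2 * σm^2))) ≤
      P {ω | σm^2 * (∑ j : Fin r, (n:ℝ)⁻¹ *
          ((W ω *ᵥ (fun a => Ehat ω a j)) ⬝ᵥ (W ω *ᵥ (fun a => Ehat ω a j)))) ≤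
        C * κ * (sqFrob (Ehat ω) + εmn^2)} := by
  refine ⟨1, 192, 1, one_pos, by norm_num, one_pos, ?_⟩
  intro m n r hm hn hr H _ _ L _ _ ι _ φ hφ K hK hHerm μhat hμ _ ρ hρ fstar _ _ s _ _ _ σm σ₀ κ
    hσm hσ₀ hκ hκ₁ _ hσ₀κ _ _ _ F hF hA3 _ Ω _ P _ β w _ _ _ hw hindep _ _ _ _ Zhat hZhat _ _ _
    Ztil hZtil _ _ _ W hW _ _ _ _ Ehat hEhat εmn _
  have hnR : (0 : ℝ) < n := Nat.cast_pos.mpr hn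
  have hσκ : σm ^ 2 ≤ κ := (pow_le_pow_left₀ hσm.le hσ₀ 2).trans hσ₀κ
  have hμ : ∀ j, 0 < μhat j := fun j => by
    obtain ⟨g, hg⟩ := hμ
    rw [hg j]
    exact hHerm.eigenvalues_pos_of_eq_inner hK hφ (g j)
  have hmσ : m * σm ^ 2 ≤ κ * n := by
    have := card_mul_sq_le_sq_of_mul_sqrt_sum_min_le (c := fun j => r * ρ ^ 2 * μhat j)
      (fun j => by have := hμ j; positivity) (A := σm / Real.sqrt n) (B := Real.sqrt κ)
      (by positivity) fun t ht => by rw [← hF]; exact hA3 t ht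
    rwa [Fintype.card_fin, div_pow, Real.sq_sqrt hnR.le, Real.sq_sqrt hκ.le, ← mul_div_assoc,
      div_le_iff₀ hnR] at this
  set t := Real.sqrt (4 * (κ * n / σm ^ 2) * (3 + κ * εmn ^ 2 / (4 * r ^ 2)))
  have ht : t ^ 2 = 4 * (κ * n / σm ^ 2) * (3 + κ * εmn ^ 2 / (4 * r ^ 2)) :=
    Real.sq_sqrt (by positivity)
  refine le_trans (ENNReal.ofReal_le_ofReal ?_)
    ((one_sub_le_measure_dotProduct_mulVec_le_of_gaussian hw (hindep.precomp Sum.inr_injective)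
      (t := t) (Real.sqrt_nonneg _)).trans (measure_mono fun ω hω => ?_))
  · rw [one_mul, ht]
    linarith [eight_pow_mul_eight_pow_mul_exp_le (r := r) (ε := εmn) hσm hσκ hmσ]
  · rw [Set.mem_ofPred_eq, mul_pow, ht,
      ← (Matrix.ext (hW ω) : W ω = Matrix.of fun i k => w i k ω)] at hω
    rw [Set.mem_ofPred_eq, hEhat]
    exact noise_term_le_of_dotProduct_mulVec_le hn hr hσm hκ.le (hκ₁.trans (Nat.one_le_cast.mpr hr))
      (sqFrob_sub_le_of_transpose_mul_self_eq_one (hZhat ω).1 hZtil) fun x => by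
        linarith [hω x]

end
end
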